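/- arXiv:2403.15113 — 2 statements merged into one kernel-verified Lean document; each statement's English description precedes it below -/
import Mathlib

section
/- Let Y^o ⊆ ι be a set of pixels, P : ι → Set E a family of subsets of E, S : M → Set E a family of obstacle shapes, and r^s ≥ 0. Assume that for every p ∈ Y^o there exists m ∈ M with P p ∩ S_m ≠ ∅. Define X̲^o = ⋃_{p ∈ Y^o} ⋂_{x ∈ P p} N_g({x}, r^s). If g ∈ X_g satisfies the safety-distance condition g ∉ N_g(S_m, r^s) for every m ∈ M, then g ∉ X̲^o. (Hence the set X̲^o built from Obstacle-labeled pixels contains no target ground location.) -/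
open Set Metric

noncomputable section

abbrev E3 : Type := EuclideanSpace ℝ (Fin 3)

/-- The ground plane. -/
def Xg : Set E3 := {x | x 2 = 0}

/-- Projection on the ground: the third coordinate is replaced by `0`. -/
def pg (x : E3) : E3 := WithLp.toLp 2 (fun i => if i = 2 then (0 : ℝ) else x i)

/-- The `r`-ground neighborhood of a set `S`. -/
def Ng (S : Set E3) (r : ℝ) : Set E3 :=
  {x ∈ Xg | ∃ y ∈ pg '' S, dist x y ≤ r}

theorem Ng_mono {S T : Set E3} (hST : S ⊆ T) (r : ℝ) : Ng S r ⊆ Ng T r :=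
  fun _ ⟨hx, y, hy, hd⟩ => ⟨hx, y, image_mono hST hy, hd⟩

theorem stmt_6_general {ι M : Type*} (Yo : Set ι) (P : ι → Set E3) (S : M → Set E3)
    (rs : ℝ)
    (hP : ∀ p ∈ Yo, ∃ m : M, (P p ∩ S m).Nonempty)
    (g : E3)
    (hsafe : ∀ m : M, g ∉ Ng (S m) rs) :
    g ∉ ⋃ p ∈ Yo, ⋂ x ∈ P p, Ng {x} rs := by
  intro hmem
  obtain ⟨p, hp, hgp⟩ := mem_iUnion₂.mp hmem
  obtain ⟨m, x, hxP, hxS⟩ := hP p hp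
  exact hsafe m (Ng_mono (singleton_subset_iff.mpr hxS) rs (mem_iInter₂.mp hgp x hxP))

theorem stmt_6 {ι M : Type*} (Yo : Set ι) (P : ι → Set E3) (S : M → Set E3)
    (rs : ℝ) (hrs : 0 ≤ rs)
    (hP : ∀ p ∈ Yo, ∃ m : M, (P p ∩ S m).Nonempty)
    (g : E3) (hg : g ∈ Xg)
    (hsafe : ∀ m : M, g ∉ Ng (S m) rs) :
    g ∉ ⋃ p ∈ Yo, ⋂ x ∈ P p, Ng {x} rs :=
  stmt_6_general Yo P S rs hP g hsafe
end
end

section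
/- Let S ⊆ E be z-convex, i.e., for every x ∈ S and every λ ∈ [0,1], λ • x + (1−λ) • p_g x ∈ S. Let g ∈ X_g and r^s ≥ 0, and assume the safety-distance condition infDist g S > r^s. Then N_g({g}, r^s) ∩ (p_g '' S) = ∅; that is, the r^s-ground neighborhood of the point g is disjoint from the ground projection of S. -/
open Set Metric

noncomputable section

def IsZConvex (S : Set E3) : Prop :=
  ∀ x ∈ S, ∀ l : ℝ, l ∈ Set.Icc (0 : ℝ) 1 → l • x + (1 - l) • pg x ∈ S

theorem pg_eq_self_of_mem_Xg {x : E3} (hx : x ∈ Xg) : pg x = x := by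
  ext i
  by_cases hi : i = 2
  · subst hi
    simpa [pg] using hx.symm
  · simp [pg, hi]

theorem IsZConvex.pg_mem {S : Set E3} (hS : IsZConvex S) {x : E3} (hx : x ∈ S) : pg x ∈ S := by
  simpa using hS x hx 0 ⟨le_rfl, zero_le_one⟩

theorem mem_Ng_singleton {g x : E3} {r : ℝ} : x ∈ Ng {g} r ↔ x ∈ Xg ∧ dist x (pg g) ≤ r := by
  simp [Ng]

theorem stmt_7_general (S : Set E3)
    (hzconv : ∀ x ∈ S, ∀ l : ℝ, l ∈ Set.Icc (0 : ℝ) 1 → l • x + (1 - l) • pg x ∈ S)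
    (g : E3) (hg : g ∈ Xg) (rs : ℝ)
    (hsafe : rs < Metric.infDist g S) :
    Ng {g} rs ∩ (pg '' S) = ∅ := by
  refine eq_empty_iff_forall_notMem.mpr ?_
  rintro _ ⟨hN, w, hw, rfl⟩
  have hclose : dist (pg w) g ≤ rs := by
    simpa [pg_eq_self_of_mem_Xg hg] using (mem_Ng_singleton.mp hN).2
  have hfar : infDist g S ≤ dist g (pg w) :=
    infDist_le_dist_of_mem (IsZConvex.pg_mem hzconv hw)
  rw [dist_comm] at hfar
  linarith

theorem stmt_7 (S : Set E3)
    (hzconv : ∀ x ∈ S, ∀ l : ℝ, l ∈ Set.Icc (0 : ℝ) 1 → l • x + (1 - l) • pg x ∈ S)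
    (g : E3) (hg : g ∈ Xg) (rs : ℝ) (hrs : 0 ≤ rs)
    (hsafe : rs < Metric.infDist g S) :
    Ng {g} rs ∩ (pg '' S) = ∅ :=
  stmt_7_general S hzconv g hg rs hsafe
end
end
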